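/- arXiv:1610.08485 — 7 statements merged into one kernel-verified Lean document; each statement's English description precedes it below -/
import Mathlib

section
/- Let n ≥ 1 and k ≥ 1. If A(z) = ∑_{m=0}^∞ A_m z^m is a formal power series with coefficients A_m ∈ M_n(ℂ) whose constant coefficient A_0 is similar to J, then there exist an invertible matrix g_0 ∈ GL_n(ℂ) and matrices g_1, …, g_k ∈ M_n(ℂ) such that, setting g(z) = (I + g_k z^k)(I + g_{k−1} z^{k−1}) ⋯ (I + g_1 z) g_0 (a polynomial gauge transformation, invertible in M_n(ℂ)[[z]]) and B(z) = g(z) A(z) g(z)^{−1} = ∑_{m=0}^∞ B_m z^m, one has B_0 = J and, for every ℓ with 1 ≤ ℓ ≤ k, the matrix B_ℓ has nonzero entries only in its n-th (last) row, i.e. (B_ℓ)_{i,j} = 0 whenever i < n. -/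
/-!
After conjugating by `P⁻¹` the constant coefficient is `J`. Gauging by `1 + g zˡ` (`ℓ ≥ 1`) leaves
the coefficients of `z⁰, …, zˡ⁻¹` unchanged and replaces `Bₗ` by `Bₗ + g J - J g`; so one treats
`ℓ = 1, …, k` in turn. Every matrix `M` can be brought into last-row form this way: the `(r, j)`
entry of `M + g J - J g` is `M r j + g r (j - 1) - g (r + 1) j`, so the rows of `g` can be
determined one after the other.
-/

open PowerSeries

namespace PowerSeries

variable {R : Type*} [Ring R]

theorem coeff_monomial_mul' (φ : R⟦X⟧) (d m : ℕ) (a : R) :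
    coeff m (monomial d a * φ) = if d ≤ m then a * coeff (m - d) φ else 0 := by
  rw [monomial_eq_C_mul_X_pow, mul_assoc, coeff_C_mul, coeff_X_pow_mul']
  split_ifs <;> simp

theorem coeff_mul_monomial' (φ : R⟦X⟧) (d m : ℕ) (a : R) :
    coeff m (φ * monomial d a) = if d ≤ m then coeff (m - d) φ * a else 0 := by
  rw [monomial_eq_C_mul_X_pow, ← mul_assoc, coeff_mul_X_pow']
  split_ifs <;> simp [coeff_mul_C]

section Gauge

variable {ℓ : ℕ} {g : R} {B B' : R⟦X⟧}

theorem coeff_add_of_one_add_monomial_mul_eq (h : (1 + monomial ℓ g) * B = B' * (1 + monomial ℓ g))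
    (m : ℕ) :
    coeff m B + (if ℓ ≤ m then g * coeff (m - ℓ) B else 0) =
      coeff m B' + if ℓ ≤ m then coeff (m - ℓ) B' * g else 0 := by
  have := congrArg (coeff m) h
  rwa [add_mul, mul_add, one_mul, mul_one, map_add, map_add, coeff_monomial_mul',
    coeff_mul_monomial'] at this

theorem coeff_eq_of_one_add_monomial_mul_eq (h : (1 + monomial ℓ g) * B = B' * (1 + monomial ℓ g))
    {m : ℕ} (hm : m < ℓ) : coeff m B' = coeff m B := by
  simpa [Nat.not_le.mpr hm] using (coeff_add_of_one_add_monomial_mul_eq h m).symm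

theorem coeff_eq_add_sub_of_one_add_monomial_mul_eq
    (h : (1 + monomial ℓ g) * B = B' * (1 + monomial ℓ g)) :
    coeff ℓ B' = coeff ℓ B + g * coeff 0 B - coeff 0 B' * g := by
  have := coeff_add_of_one_add_monomial_mul_eq h ℓ
  simp only [le_refl, if_true, Nat.sub_self] at this
  rw [this, add_sub_cancel_right]

end Gauge

@[simp]
theorem constantCoeff_one_add_monomial_succ (d : ℕ) (a : R) :
    constantCoeff (1 + monomial (d + 1) a) = 1 := by
  rw [map_add, map_one, ← coeff_zero_eq_constantCoeff_apply, coeff_monomial,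
    if_neg (Nat.succ_ne_zero d).symm, add_zero]

noncomputable def gaugeProduct (gs : ℕ → R) (k : ℕ) : R⟦X⟧ :=
  ((List.range k).reverse.map fun i => 1 + monomial (i + 1) (gs (i + 1))).prod

variable (gs : ℕ → R)

@[simp]
theorem gaugeProduct_zero : gaugeProduct gs 0 = 1 := rfl

theorem gaugeProduct_succ (k : ℕ) :
    gaugeProduct gs (k + 1) = (1 + monomial (k + 1) (gs (k + 1))) * gaugeProduct gs k := by
  simp [gaugeProduct, List.range_succ]

theorem gaugeProduct_congr {gs' : ℕ → R} {k : ℕ} (h : ∀ i, 1 ≤ i → i ≤ k → gs i = gs' i) :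
    gaugeProduct gs k = gaugeProduct gs' k := by
  induction k with
  | zero => rfl
  | succ k ih =>
    rw [gaugeProduct_succ, gaugeProduct_succ, h (k + 1) (by omega) le_rfl,
      ih fun i h₁ h₂ => h i h₁ (by omega)]

@[simp]
theorem constantCoeff_gaugeProduct (k : ℕ) : constantCoeff (gaugeProduct gs k) = 1 := by
  induction k with
  | zero => simp
  | succ k ih => rw [gaugeProduct_succ, map_mul, ih, constantCoeff_one_add_monomial_succ, one_mul]

theorem exists_gaugeProduct_mul_eq_mul_gaugeProduct (S : Set R) (A : R⟦X⟧)
    (hS : ∀ M, ∃ g, M + g * coeff 0 A - coeff 0 A * g ∈ S) (k : ℕ) :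
    ∃ (gs : ℕ → R) (B : R⟦X⟧), gaugeProduct gs k * A = B * gaugeProduct gs k ∧
      coeff 0 B = coeff 0 A ∧ ∀ ℓ, 1 ≤ ℓ → ℓ ≤ k → coeff ℓ B ∈ S := by
  induction k with
  | zero => exact ⟨0, A, by simp, rfl, fun ℓ h₁ h₂ => by omega⟩
  | succ k ih =>
    obtain ⟨gs, B, hBA, hB₀, hBS⟩ := ih
    obtain ⟨g, hg⟩ := hS (coeff (k + 1) B)
    set F : R⟦X⟧ := 1 + monomial (k + 1) g
    have hF : constantCoeff F = ↑(1 : Rˣ) := by simp [F]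
    set B' := F * B * invOfUnit F 1
    have hFB : F * B = B' * F := by rw [mul_assoc _ (invOfUnit F 1), invOfUnit_mul _ _ hF, mul_one]
    have hB'₀ : coeff 0 B' = coeff 0 A := by
      rw [coeff_eq_of_one_add_monomial_mul_eq hFB k.succ_pos, hB₀]
    refine ⟨Function.update gs (k + 1) g, B', ?_, hB'₀, fun ℓ h₁ h₂ => ?_⟩
    · have hgs : gaugeProduct (Function.update gs (k + 1) g) k = gaugeProduct gs k :=
        gaugeProduct_congr _ fun i _ hi => Function.update_of_ne (by omega) _ _
      rw [gaugeProduct_succ, hgs, Function.update_self, mul_assoc, hBA, ← mul_assoc, hFB,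
        mul_assoc]
    · rcases Nat.lt_or_eq_of_le h₂ with hℓ | rfl
      · rw [coeff_eq_of_one_add_monomial_mul_eq hFB hℓ]
        exact hBS ℓ h₁ (by omega)
      · rwa [coeff_eq_add_sub_of_one_add_monomial_mul_eq hFB, hB₀, hB'₀]

end PowerSeries

namespace Matrix

def nilpotentJordanBlock (R : Type*) [Zero R] [One R] (n : ℕ) : Matrix (Fin n) (Fin n) R :=
  of fun i j => if (i : ℕ) + 1 = j then 1 else 0

variable {R : Type*} {n : ℕ}

def SupportedOnLastRow [Zero R] (M : Matrix (Fin n) (Fin n) R) : Prop :=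
  ∀ i j : Fin n, (i : ℕ) + 1 < n → M i j = 0

section Semiring

variable [Semiring R] (f : ℕ → ℕ → R) (i j : Fin n)

theorem of_mul_nilpotentJordanBlock_apply :
    (of (fun i j : Fin n => f i j) * nilpotentJordanBlock R n) i j =
      if (j : ℕ) = 0 then 0 else f i (j - 1) := by
  rcases j with ⟨_ | j, hj⟩
  · simp [mul_apply, nilpotentJordanBlock]
  · rw [mul_apply, Finset.sum_eq_single_of_mem (⟨j, by omega⟩ : Fin n) (Finset.mem_univ _)]
    · simp [nilpotentJordanBlock]
    · intro b _ hb
      have : (b : ℕ) ≠ j := fun h => hb (Fin.ext h)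
      simp [nilpotentJordanBlock, this]

theorem nilpotentJordanBlock_mul_of_apply :
    (nilpotentJordanBlock R n * of (fun i j : Fin n => f i j)) i j =
      if (i : ℕ) + 1 < n then f (i + 1) j else 0 := by
  rw [mul_apply]
  split_ifs with hi
  · rw [Finset.sum_eq_single_of_mem (⟨i + 1, hi⟩ : Fin n) (Finset.mem_univ _)]
    · simp [nilpotentJordanBlock]
    · intro b _ hb
      have : (i : ℕ) + 1 ≠ b := fun h => hb (Fin.ext h.symm)
      simp [nilpotentJordanBlock, this]
  · refine Finset.sum_eq_zero fun b _ => ?_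
    have : (i : ℕ) + 1 ≠ b := by omega
    simp [nilpotentJordanBlock, this]

end Semiring

def lastRowNormalizer [Ring R] (M : ℕ → ℕ → R) : ℕ → ℕ → R
  | 0, _ => 0
  | r + 1, j => M r j + if j = 0 then 0 else lastRowNormalizer M r (j - 1)

theorem exists_supportedOnLastRow_add_mul_nilpotentJordanBlock_sub [Ring R]
    (M : Matrix (Fin n) (Fin n) R) :
    ∃ g, SupportedOnLastRow (M + g * nilpotentJordanBlock R n - nilpotentJordanBlock R n * g) := by
  let M' : ℕ → ℕ → R := fun r j => if h : r < n ∧ j < n then M ⟨r, h.1⟩ ⟨j, h.2⟩ else 0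
  refine ⟨of fun i j => lastRowNormalizer M' i j, fun i j hi => ?_⟩
  rw [sub_apply, add_apply, of_mul_nilpotentJordanBlock_apply, nilpotentJordanBlock_mul_of_apply,
    if_pos hi, lastRowNormalizer]
  simp [M']

end Matrix

open Matrix

theorem normal_form_existence_general (n k : ℕ)
    (J : Matrix (Fin n) (Fin n) ℂ)
    (hJ : ∀ i j : Fin n, J i j = if (i : ℕ) + 1 = (j : ℕ) then 1 else 0)
    (A : PowerSeries (Matrix (Fin n) (Fin n) ℂ))
    (hA0 : ∃ P : (Matrix (Fin n) (Fin n) ℂ)ˣ,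
      PowerSeries.coeff 0 A = (P : Matrix (Fin n) (Fin n) ℂ) * J * (↑P⁻¹ : Matrix (Fin n) (Fin n) ℂ)) :
    ∃ (g0 : (Matrix (Fin n) (Fin n) ℂ)ˣ) (gs : ℕ → Matrix (Fin n) (Fin n) ℂ)
      (h : PowerSeries (Matrix (Fin n) (Fin n) ℂ)),
      (((List.range k).reverse.map
          (fun i => (1 : PowerSeries (Matrix (Fin n) (Fin n) ℂ))
            + PowerSeries.monomial (i + 1) (gs (i + 1)))).prod
          * PowerSeries.C (g0 : Matrix (Fin n) (Fin n) ℂ)) * h = 1 ∧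
      h * (((List.range k).reverse.map
          (fun i => (1 : PowerSeries (Matrix (Fin n) (Fin n) ℂ))
            + PowerSeries.monomial (i + 1) (gs (i + 1)))).prod
          * PowerSeries.C (g0 : Matrix (Fin n) (Fin n) ℂ)) = 1 ∧
      (PowerSeries.coeff 0
          ((((List.range k).reverse.map
            (fun i => (1 : PowerSeries (Matrix (Fin n) (Fin n) ℂ))
              + PowerSeries.monomial (i + 1) (gs (i + 1)))).prod
            * PowerSeries.C (g0 : Matrix (Fin n) (Fin n) ℂ)) * A * h) = J) ∧
      ∀ ℓ : ℕ, 1 ≤ ℓ → ℓ ≤ k → ∀ i j : Fin n, (i : ℕ) + 1 < n →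
        PowerSeries.coeff ℓ
          ((((List.range k).reverse.map
            (fun i => (1 : PowerSeries (Matrix (Fin n) (Fin n) ℂ))
              + PowerSeries.monomial (i + 1) (gs (i + 1)))).prod
            * PowerSeries.C (g0 : Matrix (Fin n) (Fin n) ℂ)) * A * h) i j = 0 := by
  obtain ⟨P, hP⟩ := hA0
  obtain rfl : J = nilpotentJordanBlock ℂ n := Matrix.ext hJ
  set A' := C (↑P⁻¹ : Matrix (Fin n) (Fin n) ℂ) * A * C (P : Matrix (Fin n) (Fin n) ℂ)
  have hA' : coeff 0 A' = nilpotentJordanBlock ℂ n := by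
    simp [A', coeff_mul_C, coeff_C_mul, hP, ← mul_assoc]
  obtain ⟨gs, B, hBA, hB₀, hBS⟩ := exists_gaugeProduct_mul_eq_mul_gaugeProduct
    {M | SupportedOnLastRow M} A'
    (fun M => hA' ▸ exists_supportedOnLastRow_add_mul_nilpotentJordanBlock_sub M) k
  set U := gaugeProduct gs k * C (↑P⁻¹ : Matrix (Fin n) (Fin n) ℂ)
  have hU : constantCoeff U = ↑P⁻¹ := by simp [U]
  have hUA : U * A * invOfUnit U P⁻¹ = B := by
    have hUB : U * A = B * U := calc
      U * A = gaugeProduct gs k * A' * C (↑P⁻¹ : Matrix (Fin n) (Fin n) ℂ) := by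
        simp only [U, A', mul_assoc, ← map_mul, Units.mul_inv, map_one, mul_one]
      _ = B * U := by rw [hBA, mul_assoc]
    rw [hUB, mul_assoc, mul_invOfUnit _ _ hU, mul_one]
  refine ⟨P⁻¹, gs, invOfUnit U P⁻¹, mul_invOfUnit _ _ hU, invOfUnit_mul _ _ hU, ?_, ?_⟩
  · change coeff 0 (U * A * _) = _
    rw [hUA, hB₀, hA']
  · intro ℓ h₁ h₂
    change SupportedOnLastRow (coeff ℓ (U * A * _))
    rw [hUA]
    exact hBS ℓ h₁ h₂

/-- **Existence of the normal form** (Theorem `normform`).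
If the constant coefficient of `A ∈ Mₙ(ℂ)[[z]]` is similar to the nilpotent Jordan block `J`,
then there is a polynomial gauge transformation
`g(z) = (I + gₖ zᵏ) ⋯ (I + g₁ z) g₀` (invertible in `Mₙ(ℂ)[[z]]`, with inverse `h`)
such that `B = g A g⁻¹` has `B₀ = J` and `B₁, …, B_k` nonzero only in the last row. -/
theorem normal_form_existence (n k : ℕ) (hn : 1 ≤ n) (hk : 1 ≤ k)
    (J : Matrix (Fin n) (Fin n) ℂ)
    (hJ : ∀ i j : Fin n, J i j = if (i : ℕ) + 1 = (j : ℕ) then 1 else 0)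
    (A : PowerSeries (Matrix (Fin n) (Fin n) ℂ))
    (hA0 : ∃ P : (Matrix (Fin n) (Fin n) ℂ)ˣ,
      PowerSeries.coeff 0 A = (P : Matrix (Fin n) (Fin n) ℂ) * J * (↑P⁻¹ : Matrix (Fin n) (Fin n) ℂ)) :
    ∃ (g0 : (Matrix (Fin n) (Fin n) ℂ)ˣ) (gs : ℕ → Matrix (Fin n) (Fin n) ℂ)
      (h : PowerSeries (Matrix (Fin n) (Fin n) ℂ)),
      (((List.range k).reverse.map
          (fun i => (1 : PowerSeries (Matrix (Fin n) (Fin n) ℂ))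
            + PowerSeries.monomial (i + 1) (gs (i + 1)))).prod
          * PowerSeries.C (g0 : Matrix (Fin n) (Fin n) ℂ)) * h = 1 ∧
      h * (((List.range k).reverse.map
          (fun i => (1 : PowerSeries (Matrix (Fin n) (Fin n) ℂ))
            + PowerSeries.monomial (i + 1) (gs (i + 1)))).prod
          * PowerSeries.C (g0 : Matrix (Fin n) (Fin n) ℂ)) = 1 ∧
      (PowerSeries.coeff 0
          ((((List.range k).reverse.map
            (fun i => (1 : PowerSeries (Matrix (Fin n) (Fin n) ℂ))
              + PowerSeries.monomial (i + 1) (gs (i + 1)))).prod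
            * PowerSeries.C (g0 : Matrix (Fin n) (Fin n) ℂ)) * A * h) = J) ∧
      ∀ ℓ : ℕ, 1 ≤ ℓ → ℓ ≤ k → ∀ i j : Fin n, (i : ℕ) + 1 < n →
        PowerSeries.coeff ℓ
          ((((List.range k).reverse.map
            (fun i => (1 : PowerSeries (Matrix (Fin n) (Fin n) ℂ))
              + PowerSeries.monomial (i + 1) (gs (i + 1)))).prod
            * PowerSeries.C (g0 : Matrix (Fin n) (Fin n) ℂ)) * A * h) i j = 0 :=
  normal_form_existence_general n k J hJ A hA0
end

section
/- Let n ≥ 2, let ω ∈ ℂ be a primitive n-th root of unity, let t be an integer with 1 ≤ t ≤ n−1, and let w_1, …, w_{t+1} be integers with −n < w_1 < 0, 0 < w_i < n for 2 ≤ i ≤ t+1, and w_1 + w_2 + ⋯ + w_{t+1} = 0. Then (1/t!) · ∑ ω^{w_1 s_1 + w_2 s_2 + ⋯ + w_{t+1} s_{t+1}} = (−1)^t · n, where the sum ranges over all tuples (s_1, …, s_{t+1}) of pairwise distinct elements of {1, …, n}. -/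
/-!
Sum over the first coordinate `s₁` first. Since `n ∤ w₁`, the full geometric sum of `ω^{w₁ x}`
over `x` vanishes, so the sum over the values `x` not taken by `s₂, …, s_{t+1}` equals minus the
sum over the `t` values they do take. Taking `s₁ = s_j` merges `w₁` into `w_j`, and what remains
is the same kind of sum with `t` weights instead of `t + 1`. The property that survives every
merge is that the weights form a minimal zero-sum sequence mod `n`: their total is divisible by
`n`, no proper nonempty sub-sum is. The sign conditions give this, since every proper nonempty
sub-sum is nonzero and lies strictly between `-n` and `n`. After `t` merges a single weight
divisible by `n` remains, and its sum consists of `n` terms equal to `1`; hence the original sum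
is `(-1)^t t! n`.
-/

open Finset

namespace Fin

def mergeHead {M : Type*} [AddCommMonoid M] {t : ℕ} (w : Fin (t + 2) → M) (j : Fin (t + 1)) :
    Fin (t + 1) → M :=
  tail w + Pi.single j (w 0)

/-- The merged weights are the fibre sums of `w` along `cons j id`, which maps `0 ↦ j` and
`i.succ ↦ i`. -/
lemma sum_mergeHead {M : Type*} [AddCommMonoid M] {t : ℕ} (w : Fin (t + 2) → M)
    (j : Fin (t + 1)) (S : Finset (Fin (t + 1))) :
    ∑ i ∈ S, mergeHead w j i = ∑ k with (cons j id : Fin (t + 2) → Fin (t + 1)) k ∈ S, w k := by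
  rw [sum_filter, sum_univ_succ]
  simp [mergeHead, sum_add_distrib, sum_pi_single', sum_ite_mem, add_comm, tail]

lemma sum_mergeHead_mul {R : Type*} [NonUnitalNonAssocSemiring R] {t : ℕ}
    (w : Fin (t + 2) → R) (j : Fin (t + 1)) (x : Fin (t + 1) → R) :
    ∑ i, mergeHead w j i * x i = ∑ i, w i.succ * x i + w 0 * x j := by
  simp [mergeHead, add_mul, sum_add_distrib, Pi.single_apply, tail]

lemma sum_injective_eq_sum_cons {α M : Type*} [Fintype α] [DecidableEq α] [AddCommMonoid M]
    {k : ℕ} (f : (Fin (k + 1) → α) → M) :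
    ∑ s with Function.Injective s, f s =
      ∑ g with Function.Injective g, ∑ x ∈ (univ.image g)ᶜ, f (cons x g) := by
  rw [sum_filter, ← (consEquiv fun _ => α).sum_comp, Fintype.sum_prod_type, sum_comm, sum_filter]
  refine sum_congr rfl fun g _ => ?_
  by_cases hg : Function.Injective g
  · simp only [consEquiv, Equiv.coe_fn_mk, cons_injective_iff, hg, and_true, ← sum_filter]
    congr 1
    ext x
    simp
  · simp [consEquiv, cons_injective_iff, hg]

end Fin

lemma IsPrimitiveRoot.sum_zpow_mul_eq_zero {n : ℕ} {ω : ℂ} (hω : IsPrimitiveRoot ω n) {a : ℤ}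
    (ha : ¬ (n : ℤ) ∣ a) : ∑ x : Fin n, ω ^ (a * x) = 0 := by
  have hne : ω ^ a ≠ 1 := by rwa [Ne, hω.zpow_eq_one_iff_dvd]
  have hpow : (ω ^ a) ^ n = 1 := by
    rw [← zpow_natCast, ← zpow_mul, mul_comm, zpow_mul, zpow_natCast, hω.pow_eq_one, one_zpow]
  simp_rw [zpow_mul, zpow_natCast]
  rw [Fin.sum_univ_eq_sum_range (fun x => (ω ^ a) ^ x), geom_sum_eq hne, hpow, sub_self, zero_div]

def IsMinimalZeroSumMod (n : ℕ) {ι : Type*} [Fintype ι] (w : ι → ℤ) : Prop :=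
  (n : ℤ) ∣ ∑ i, w i ∧ ∀ S : Finset ι, S.Nonempty → S ≠ univ → ¬ (n : ℤ) ∣ ∑ i ∈ S, w i

lemma IsMinimalZeroSumMod.mergeHead {n t : ℕ} {w : Fin (t + 2) → ℤ}
    (hw : IsMinimalZeroSumMod n w) (j : Fin (t + 1)) :
    IsMinimalZeroSumMod n (Fin.mergeHead w j) := by
  refine ⟨by simpa [Fin.sum_mergeHead] using hw.1, fun S hS hSu => ?_⟩
  rw [Fin.sum_mergeHead]
  refine hw.2 _ ?_ ?_
  · obtain ⟨i, hi⟩ := hS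
    exact ⟨i.succ, by simpa using hi⟩
  · obtain ⟨i, hi⟩ : ∃ i, i ∉ S := by simpa [eq_univ_iff_forall] using hSu
    simpa [eq_univ_iff_forall] using ⟨i.succ, by simpa using hi⟩

section SignConditions

variable {ι : Type*} [Fintype ι] [DecidableEq ι] {n : ℕ} {w : ι → ℤ} {i₀ : ι}

lemma sum_mem_Ioo_of_forall_ne_pos (hsum : ∑ i, w i = 0) (hi₀ : -(n : ℤ) < w i₀)
    (hpos : ∀ i, i ≠ i₀ → 0 < w i) {A : Finset ι} (hA : i₀ ∈ A) (hAu : A ≠ univ) :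
    ∑ i ∈ A, w i ∈ Set.Ioo (-(n : ℤ)) 0 := by
  have hcompl : 0 < ∑ i ∈ Aᶜ, w i :=
    sum_pos (fun i hi => hpos i fun h => mem_compl.mp hi (h ▸ hA))
      ((compl_ne_univ_iff_nonempty Aᶜ).mp (by rwa [compl_compl]))
  have hrest : 0 ≤ ∑ i ∈ A.erase i₀, w i :=
    sum_nonneg fun i hi => (hpos i (ne_of_mem_erase hi)).le
  have := sum_add_sum_compl A w
  have := add_sum_erase A w hA
  constructor <;> linarith

lemma isMinimalZeroSumMod_of_forall_ne_pos (hsum : ∑ i, w i = 0) (hi₀ : -(n : ℤ) < w i₀)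
    (hpos : ∀ i, i ≠ i₀ → 0 < w i) : IsMinimalZeroSumMod n w := by
  have not_dvd {A : Finset ι} (hA : i₀ ∈ A) (hAu : A ≠ univ) : ¬ (n : ℤ) ∣ ∑ i ∈ A, w i := by
    intro hdvd
    obtain ⟨hlo, hhi⟩ := sum_mem_Ioo_of_forall_ne_pos hsum hi₀ hpos hA hAu
    have := Int.eq_zero_of_abs_lt_dvd hdvd (abs_lt.mpr ⟨hlo, by omega⟩)
    omega
  refine ⟨hsum ▸ dvd_zero _, fun S hS hSu => ?_⟩
  by_cases h : i₀ ∈ S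
  · exact not_dvd h hSu
  · have hS' : ∑ i ∈ S, w i = -∑ i ∈ Sᶜ, w i := by
      linarith [sum_add_sum_compl S w]
    rw [hS', dvd_neg]
    exact not_dvd (mem_compl.mpr h) ((compl_ne_univ_iff_nonempty S).mpr hS)

end SignConditions

noncomputable def injectiveTupleSum (ω : ℂ) (n : ℕ) {k : ℕ} (w : Fin k → ℤ) : ℂ :=
  ∑ s : Fin k → Fin n with Function.Injective s, ω ^ ∑ i, w i * (s i : ℤ)

lemma injectiveTupleSum_eq_neg_sum_mergeHead {n t : ℕ} {ω : ℂ} (hω : IsPrimitiveRoot ω n)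
    (w : Fin (t + 2) → ℤ) (hw0 : ¬ (n : ℤ) ∣ w 0) :
    injectiveTupleSum ω n w = -∑ j, injectiveTupleSum ω n (Fin.mergeHead w j) := by
  rcases eq_or_ne n 0 with rfl | hn
  · simp [injectiveTupleSum]
  have hω0 : ω ≠ 0 := hω.ne_zero hn
  have hcompl {g : Fin (t + 1) → Fin n} (hg : Function.Injective g) :
      ∑ x ∈ (univ.image g)ᶜ, ω ^ (w 0 * x) = -∑ j, ω ^ (w 0 * g j) := by
    rw [eq_neg_iff_add_eq_zero, ← sum_image (f := fun x : Fin n => ω ^ (w 0 * x)) hg.injOn,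
      sum_compl_add_sum, hω.sum_zpow_mul_eq_zero hw0]
  calc injectiveTupleSum ω n w
      = ∑ g : Fin (t + 1) → Fin n with Function.Injective g,
          (∑ x ∈ (univ.image g)ᶜ, ω ^ (w 0 * x)) * ω ^ ∑ i, w i.succ * (g i : ℤ) := by
        simp only [injectiveTupleSum, Fin.sum_injective_eq_sum_cons, sum_mul, Fin.sum_univ_succ,
          Fin.cons_zero, Fin.cons_succ, zpow_add₀ hω0]
    _ = -∑ g : Fin (t + 1) → Fin n with Function.Injective g,
          ∑ j, ω ^ ∑ i, Fin.mergeHead w j i * (g i : ℤ) := by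
        rw [← sum_neg_distrib]
        refine sum_congr rfl fun g hg => ?_
        rw [hcompl (mem_filter.mp hg).2, neg_mul, sum_mul]
        simp only [Fin.sum_mergeHead_mul, zpow_add₀ hω0, mul_comm]
    _ = -∑ j, injectiveTupleSum ω n (Fin.mergeHead w j) := by
        rw [sum_comm]
        rfl

theorem injectiveTupleSum_of_isMinimalZeroSumMod {n : ℕ} {ω : ℂ} (hω : IsPrimitiveRoot ω n) :
    ∀ {t : ℕ} (w : Fin (t + 1) → ℤ), IsMinimalZeroSumMod n w →
      injectiveTupleSum ω n w = (-1) ^ t * t.factorial * n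
  | 0, w, hw => by
    have hw0 : (n : ℤ) ∣ w 0 := by simpa using hw.1
    have hterm (x : Fin n) : ω ^ (w 0 * x) = 1 :=
      (hω.zpow_eq_one_iff_dvd _).mpr (hw0.mul_right _)
    simp [injectiveTupleSum, hterm, Function.injective_of_subsingleton]
  | t + 1, w, hw => by
    have hw0 : ¬ (n : ℤ) ∣ w 0 := by
      simpa using hw.2 {0} (singleton_nonempty 0) (singleton_ne_univ 0)
    rw [injectiveTupleSum_eq_neg_sum_mergeHead hω w hw0]
    simp only [fun j => injectiveTupleSum_of_isMinimalZeroSumMod hω _ (hw.mergeHead j)]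
    simp [Nat.factorial_succ]
    ring

theorem roots_of_unity_distinct_tuple_sum_general (n t : ℕ)
    (ω : ℂ) (hω : IsPrimitiveRoot ω n)
    (w : Fin (t + 1) → ℤ)
    (hw1a : -(n : ℤ) < w 0)
    (hwi : ∀ i : Fin (t + 1), i ≠ 0 → 0 < w i ∧ w i < n)
    (hwsum : ∑ i, w i = 0) :
    (1 / (t.factorial : ℂ)) *
      ∑ s ∈ Finset.univ.filter (fun s : Fin (t + 1) → Fin n => Function.Injective s),
        ω ^ (∑ i, w i * ((s i : ℤ) + 1)) = (-1) ^ t * n := by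
  have hshift (s : Fin (t + 1) → Fin n) :
      ∑ i, w i * ((s i : ℤ) + 1) = ∑ i, w i * (s i : ℤ) := by
    simp [mul_add, sum_add_distrib, hwsum]
  have hmin : IsMinimalZeroSumMod n w :=
    isMinimalZeroSumMod_of_forall_ne_pos hwsum hw1a fun i hi => (hwi i hi).1
  have hfac : (t.factorial : ℂ) ≠ 0 := mod_cast t.factorial_ne_zero
  simp_rw [hshift]
  rw [← injectiveTupleSum, injectiveTupleSum_of_isMinimalZeroSumMod hω w hmin]
  field_simp

/-- **Lemma 3.1.** For a primitive `n`-th root of unity `ω` and integer weights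
`w₁, …, w_{t+1}` with `-n < w₁ < 0`, `0 < wᵢ < n` for `i ≥ 2`, summing to zero,
`(1/t!) ∑ ω^{w₁s₁ + ⋯ + w_{t+1}s_{t+1}} = (-1)^t n`, the sum being over tuples
of pairwise distinct elements `s₁, …, s_{t+1}` of `{1, …, n}`. -/
theorem roots_of_unity_distinct_tuple_sum (n t : ℕ) (hn : 2 ≤ n) (ht1 : 1 ≤ t) (ht2 : t ≤ n - 1)
    (ω : ℂ) (hω : IsPrimitiveRoot ω n)
    (w : Fin (t + 1) → ℤ)
    (hw1a : -(n : ℤ) < w 0) (hw1b : w 0 < 0)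
    (hwi : ∀ i : Fin (t + 1), i ≠ 0 → 0 < w i ∧ w i < n)
    (hwsum : ∑ i, w i = 0) :
    (1 / (t.factorial : ℂ)) *
      ∑ s ∈ Finset.univ.filter (fun s : Fin (t + 1) → Fin n => Function.Injective s),
        ω ^ (∑ i, w i * ((s i : ℤ) + 1)) = (-1) ^ t * n :=
  roots_of_unity_distinct_tuple_sum_general n t ω hω w hw1a hwi hwsum
end

section
/- Let n ≥ 2, let ω ∈ ℂ be a primitive n-th root of unity, and let t be an integer with 1 ≤ t ≤ n−1. Then ∑_{1 ≤ s_2 < s_3 < ⋯ < s_{t+1} ≤ n} ω^{s_2 + s_3 + ⋯ + s_{t+1}} · ( ∑_{s_1 ∈ {1,…,n} \ {s_2,…,s_{t+1}}} ω^{−t·s_1} ) = (−1)^t · n. -/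
open Finset Polynomial

/-!
Swapping the two sums, the coefficient of `ω ^ (-t s₁)` is the `t`-th elementary symmetric
function of the `n`-th roots of unity other than `ζ = ω ^ s₁`. These are the roots of
`(X ^ n - 1) / (X - ζ) = ∑ ζ ^ (n - 1 - i) X ^ i`, so by Vieta that function is `(-ζ) ^ t`,
and each `s₁` contributes `(-ζ) ^ t ζ ^ (-t) = (-1) ^ t`.
-/

theorem Multiset.esymm_eq_neg_pow_of_prod_X_sub_C_mul {R : Type*} [CommRing R] (s : Multiset R)
    (a : R)
    (h : (s.map fun r => X - C r).prod * (X - C a) = X ^ (card s + 1) - C (a ^ (card s + 1)))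
    {t : ℕ} (ht : t ≤ card s) : s.esymm t = (-a) ^ t := by
  have hquot : (s.map fun r => X - C r).prod =
      ∑ i ∈ Finset.range (card s + 1), C (a ^ (card s - i)) * X ^ i := by
    apply (monic_X_sub_C a).isRegular.right
    simp only [h, C_pow, mul_comm (C _ ^ _), ← geom_sum₂_mul, add_tsub_cancel_right]
  have hcoeff := prod_X_sub_C_coeff s (Nat.sub_le (card s) t)
  rw [hquot, Nat.sub_sub_self ht, finsetSum_coeff] at hcoeff
  simp only [coeff_C_mul_X_pow, sum_ite_eq, Finset.mem_range] at hcoeff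
  rw [if_pos (by omega), Nat.sub_sub_self ht] at hcoeff
  rw [neg_pow, hcoeff, ← mul_assoc, ← mul_pow, neg_one_mul, neg_neg, one_pow, one_mul]

theorem IsPrimitiveRoot.prod_X_sub_C_pow_succ {R : Type*} [CommRing R] [IsDomain R]
    {ω : R} {n : ℕ} (hω : IsPrimitiveRoot ω n) (hn : 0 < n) :
    ∏ i : Fin n, (X - C (ω ^ ((i : ℕ) + 1))) = X ^ n - 1 := by
  rw [Fin.prod_univ_eq_prod_range (fun i => X - C (ω ^ (i + 1))), ← C_1,
    X_pow_sub_C_eq_prod hω hn hω.pow_eq_one]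
  simp only [pow_succ]

theorem IsPrimitiveRoot.sum_powersetCard_erase_prod_pow_succ {R : Type*} [CommRing R] [IsDomain R]
    {ω : R} {n t : ℕ} (hω : IsPrimitiveRoot ω n) (hn : 0 < n) (ht : t ≤ n - 1) (a : Fin n) :
    ∑ S ∈ (univ.erase a).powersetCard t, ∏ x ∈ S, ω ^ ((x : ℕ) + 1) =
      (-ω ^ ((a : ℕ) + 1)) ^ t := by
  rw [← esymm_map_val]
  apply Multiset.esymm_eq_neg_pow_of_prod_X_sub_C_mul
  · simp only [Multiset.map_map, Function.comp_def, prod_map_val]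
    rw [prod_erase_mul _ _ (mem_univ a), hω.prod_X_sub_C_pow_succ hn]
    simp only [Multiset.card_map, card_val, mem_univ, card_erase_of_mem, card_univ,
      Fintype.card_fin, Nat.sub_add_cancel hn]
    rw [pow_right_comm, hω.pow_eq_one, one_pow, C_1]
  · simpa using ht

theorem Finset.sum_powersetCard_mul_sum_compl {α M : Type*} [Fintype α] [DecidableEq α]
    [NonUnitalNonAssocSemiring M] (k : ℕ) (f : Finset α → M) (g : α → M) :
    ∑ S ∈ univ.powersetCard k, f S * ∑ x ∈ Sᶜ, g x =
      ∑ x, (∑ S ∈ (univ.erase x).powersetCard k, f S) * g x := by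
  simp_rw [mul_sum, sum_mul]
  refine sum_comm' (fun S x => ?_)
  simp only [mem_powersetCard, mem_compl, mem_univ, true_and, subset_erase, subset_univ]
  tauto

-- `x : Fin n` stands for `x + 1 ∈ {1, …, n}`; increasing `t`-tuples are `t`-subsets.
theorem roots_of_unity_ordered_sum_general (n t : ℕ) (hn : 2 ≤ n) (ht2 : t ≤ n - 1)
    (ω : ℂ) (hω : IsPrimitiveRoot ω n) :
    ∑ S ∈ Finset.univ.powersetCard t (α := Fin n),
      ω ^ (∑ x ∈ S, ((x : ℕ) + 1)) *
        ∑ s1 ∈ Sᶜ, ω ^ (-(t : ℤ) * ((s1 : ℤ) + 1)) = (-1) ^ t * n := by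
  have hω0 : ω ≠ 0 := hω.ne_zero (by omega)
  have hcancel (a : Fin n) : (ω ^ ((a : ℕ) + 1)) ^ t * ω ^ (-(t : ℤ) * ((a : ℤ) + 1)) = 1 := by
    rw [← zpow_natCast, ← zpow_natCast, ← zpow_mul, ← zpow_add₀ hω0]
    push_cast
    ring_nf
    exact zpow_zero ω
  simp_rw [← prod_pow_eq_pow_sum]
  rw [sum_powersetCard_mul_sum_compl]
  calc ∑ a : Fin n, (∑ S ∈ (univ.erase a).powersetCard t, ∏ x ∈ S, ω ^ ((x : ℕ) + 1)) *
          ω ^ (-(t : ℤ) * ((a : ℤ) + 1))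
      = ∑ _a : Fin n, (-1 : ℂ) ^ t := sum_congr rfl fun a _ => by
        rw [hω.sum_powersetCard_erase_prod_pow_succ (by omega) ht2, neg_pow, mul_assoc, hcancel,
          mul_one]
    _ = (-1) ^ t * n := by simp [mul_comm]

/-- Equation (3.8): for a primitive `n`-th root of unity `ω` and `1 ≤ t ≤ n - 1`,
`∑_{1 ≤ s₂ < ⋯ < s_{t+1} ≤ n} ω^{s₂ + ⋯ + s_{t+1}} (∑_{s₁ ∉ {s₂,…,s_{t+1}}} ω^{-t s₁}) = (-1)^t n`.
Strictly increasing tuples `(s₂, …, s_{t+1})` of elements of `{1, …, n}` are identified with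
subsets of `Fin n` of cardinality `t`. -/
theorem roots_of_unity_ordered_sum (n t : ℕ) (hn : 2 ≤ n) (ht1 : 1 ≤ t) (ht2 : t ≤ n - 1)
    (ω : ℂ) (hω : IsPrimitiveRoot ω n) :
    ∑ S ∈ Finset.univ.powersetCard t (α := Fin n),
      ω ^ (∑ x ∈ S, ((x : ℕ) + 1)) *
        ∑ s1 ∈ Sᶜ, ω ^ (-(t : ℤ) * ((s1 : ℤ) + 1)) = (-1) ^ t * n :=
  roots_of_unity_ordered_sum_general n t hn ht2 ω hω
end

section
/- Let n ≥ 1. For every matrix M ∈ M_n(ℂ) there exists a matrix G ∈ M_n(ℂ) such that the matrix M − (JG − GJ) has nonzero entries only in its n-th (last) row, i.e. (M − [J,G])_{i,j} = 0 for all 1 ≤ i ≤ n−1 and 1 ≤ j ≤ n. -/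
/-!
Left multiplication by `J` shifts rows up and right multiplication shifts columns to the right:
`(J G)ᵢⱼ = G_{i+1,j}` and `(G J)ᵢⱼ = G_{i,j-1}` (zero for `j = 0`). So `[J, G]ᵢⱼ = Mᵢⱼ` for the
first `n - 1` rows amounts to `G_{i+1,j} = Mᵢⱼ + G_{i,j-1}`, which defines `G` row by row
starting from a zero first row.
-/

namespace Matrix

section Superdiagonal

variable {R : Type*} [NonAssocSemiring R] {n : ℕ} {J : Matrix (Fin n) (Fin n) R}

theorem mul_apply_of_eq_superdiagonal
    (hJ : ∀ i j : Fin n, J i j = if (i : ℕ) + 1 = (j : ℕ) then 1 else 0)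
    (G : Matrix (Fin n) (Fin n) R) (i j : Fin n) (hi : (i : ℕ) + 1 < n) :
    (J * G) i j = G ⟨i + 1, hi⟩ j := by
  rw [mul_apply, Finset.sum_eq_single ⟨i + 1, hi⟩]
  · simp [hJ]
  · intro k _ hk
    rw [hJ, if_neg fun h ↦ hk (Fin.ext h.symm), zero_mul]
  · simp

theorem mul_apply_zero_of_eq_superdiagonal
    (hJ : ∀ i j : Fin n, J i j = if (i : ℕ) + 1 = (j : ℕ) then 1 else 0)
    (G : Matrix (Fin n) (Fin n) R) (i : Fin n) (h0 : 0 < n) :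
    (G * J) i ⟨0, h0⟩ = 0 := by
  simp [mul_apply, hJ]

theorem mul_apply_succ_of_eq_superdiagonal
    (hJ : ∀ i j : Fin n, J i j = if (i : ℕ) + 1 = (j : ℕ) then 1 else 0)
    (G : Matrix (Fin n) (Fin n) R) (i : Fin n) {k : ℕ} (hk : k + 1 < n) :
    (G * J) i ⟨k + 1, hk⟩ = G i ⟨k, by omega⟩ := by
  rw [mul_apply, Finset.sum_eq_single ⟨k, by omega⟩]
  · simp [hJ]
  · intro l _ hl
    rw [hJ, if_neg fun h ↦ hl (Fin.ext (by simpa using h)), mul_zero]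
  · simp

end Superdiagonal

/-- The solution of `g (i + 1) j = m i j + g i (j - 1)` with `g 0 = 0` and `g i (-1) = 0`. -/
def superdiagonalCommutatorSolution {R : Type*} [Add R] [Zero R] (m : ℕ → ℕ → R) :
    ℕ → ℕ → R
  | 0, _ => 0
  | i + 1, 0 => m i 0
  | i + 1, j + 1 => m i (j + 1) + superdiagonalCommutatorSolution m i j

theorem exists_sub_commutator_superdiagonal_eq_zero {R : Type*} [Ring R] {n : ℕ}
    {J : Matrix (Fin n) (Fin n) R}
    (hJ : ∀ i j : Fin n, J i j = if (i : ℕ) + 1 = (j : ℕ) then 1 else 0)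
    (M : Matrix (Fin n) (Fin n) R) :
    ∃ G : Matrix (Fin n) (Fin n) R, ∀ i j : Fin n, (i : ℕ) + 1 < n →
      (M - (J * G - G * J)) i j = 0 := by
  let m : ℕ → ℕ → R := fun i j ↦ if h : i < n ∧ j < n then M ⟨i, h.1⟩ ⟨j, h.2⟩ else 0
  let g := superdiagonalCommutatorSolution m
  refine ⟨of fun i j ↦ g i j, fun i j hi ↦ ?_⟩
  rw [sub_apply, sub_apply, mul_apply_of_eq_superdiagonal hJ _ _ _ hi]
  obtain ⟨_ | k, hj⟩ := j
  · rw [mul_apply_zero_of_eq_superdiagonal hJ]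
    simp [g, m, superdiagonalCommutatorSolution, hj]
  · rw [mul_apply_succ_of_eq_superdiagonal hJ]
    simp [g, m, superdiagonalCommutatorSolution, hj]

end Matrix

theorem exists_commutator_clearing_rows_general (n : ℕ)
    (J : Matrix (Fin n) (Fin n) ℂ)
    (hJ : ∀ i j : Fin n, J i j = if (i : ℕ) + 1 = (j : ℕ) then 1 else 0)
    (M : Matrix (Fin n) (Fin n) ℂ) :
    ∃ G : Matrix (Fin n) (Fin n) ℂ, ∀ i j : Fin n, (i : ℕ) + 1 < n →
      (M - (J * G - G * J)) i j = 0 :=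
  Matrix.exists_sub_commutator_superdiagonal_eq_zero hJ M

/-- For every `M ∈ Mₙ(ℂ)` there is `G ∈ Mₙ(ℂ)` such that `M - [J,G]` has nonzero
entries only in the last row, where `J` is the nilpotent Jordan block. -/
theorem exists_commutator_clearing_rows (n : ℕ) (hn : 1 ≤ n)
    (J : Matrix (Fin n) (Fin n) ℂ)
    (hJ : ∀ i j : Fin n, J i j = if (i : ℕ) + 1 = (j : ℕ) then 1 else 0)
    (M : Matrix (Fin n) (Fin n) ℂ) :
    ∃ G : Matrix (Fin n) (Fin n) ℂ, ∀ i j : Fin n, (i : ℕ) + 1 < n →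
      (M - (J * G - G * J)) i j = 0 :=
  exists_commutator_clearing_rows_general n J hJ M
end

section
/- Let n ≥ 1 and let χ(z,ζ) = ζ^n + c_1(z) ζ^{n−1} + ⋯ + c_n(z) be a monic polynomial in ζ with coefficients c_1, …, c_n ∈ ℂ[[z]] such that c_i(0) = 0 for every 1 ≤ i ≤ n and the z-adic valuation of c_n is exactly 1. Then there exists a formal power series ζ_1(w) = ∑_{m=1}^∞ a_m w^m ∈ ℂ[[w]] with zero constant term such that, with ω a primitive n-th root of unity, χ(w^n, ζ) = ∏_{i=0}^{n−1} ( ζ − ζ_1(ω^i w) ) holds in ℂ[[w]][ζ], where χ(w^n, ζ) denotes the polynomial obtained by substituting z = w^n into each coefficient c_j(z), and ζ_1(ω^i w) denotes the power series obtained from ζ_1 by rescaling w to ω^i w. -/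
/-!
Write `cₙ = z·e` with `e(0) = a ≠ 0`. Substituting `ζ = w·u` into `χ(wⁿ, ζ)` gives `wⁿ·g(u)` for a
monic `g` with `g ≡ ζⁿ + a (mod w)`. A root `b` of `ζⁿ + a` is simple since `b ≠ 0`, so Hensel's
lemma in `ℂ[[w]]` lifts it to a root `u` of `g`, and `ζ₁ = w·u` is a root of `χ(wⁿ, ζ)`. The
coefficients of `χ(wⁿ, ζ)` are series in `wⁿ`, so every `ζ₁(ωⁱw)` is a root as well; these `n`
roots are distinct because their `w`-coefficients `ωⁱb` are, and a monic polynomial of degree `n`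
over a domain with `n` distinct roots is the product of the corresponding linear factors.
-/

open Polynomial

namespace Polynomial

variable {R S : Type*} [CommRing R] [CommRing S] {n : ℕ}

noncomputable def ofMonicCoeffs (a : Fin n → R) : R[X] :=
  X ^ n + ∑ i : Fin n, C (a i) * X ^ (n - 1 - (i : ℕ))

theorem degree_sum_C_mul_X_pow_lt (a : Fin n → R) :
    (∑ i : Fin n, C (a i) * X ^ (n - 1 - (i : ℕ))).degree < (n : WithBot ℕ) := by
  refine (degree_sum_le _ _).trans_lt ((Finset.sup_lt_iff (WithBot.bot_lt_coe n)).2 fun i _ => ?_)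
  exact (degree_C_mul_X_pow_le _ _).trans_lt
    (WithBot.coe_lt_coe.2 (show n - 1 - (i : ℕ) < n by omega))

theorem monic_ofMonicCoeffs (a : Fin n → R) : (ofMonicCoeffs a).Monic :=
  monic_X_pow_add (degree_sum_C_mul_X_pow_lt a)

theorem natDegree_ofMonicCoeffs [Nontrivial R] (a : Fin n → R) :
    (ofMonicCoeffs a).natDegree = n := by
  rw [ofMonicCoeffs, natDegree_add_eq_left_of_degree_lt, natDegree_X_pow]
  rw [degree_X_pow]
  exact degree_sum_C_mul_X_pow_lt a

theorem map_ofMonicCoeffs (f : R →+* S) (a : Fin n → R) :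
    (ofMonicCoeffs a).map f = ofMonicCoeffs fun i => f (a i) := by
  simp [ofMonicCoeffs, Polynomial.map_sum]

theorem eval_mul_ofMonicCoeffs_pow_mul (x u : R) (a : Fin n → R) :
    (ofMonicCoeffs fun i => x ^ n * a i).eval (x * u) =
      x ^ n * (ofMonicCoeffs fun i => x ^ (n - 1 - (i : ℕ)) * a i).eval u := by
  simp only [ofMonicCoeffs, eval_add, eval_pow, eval_X, eval_finsetSum, eval_mul, eval_C,
    mul_add, Finset.mul_sum, mul_pow]
  congr 1
  exact Finset.sum_congr rfl fun i _ => by ring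

theorem map_ofMonicCoeffs_pow_mul_of_map_eq_zero {m : ℕ} (f : R →+* S) {x : R} (hx : f x = 0)
    (a : Fin (m + 1) → R) :
    (ofMonicCoeffs fun i => x ^ (m + 1 - 1 - (i : ℕ)) * a i).map f =
      X ^ (m + 1) + C (f (a (Fin.last m))) := by
  rw [map_ofMonicCoeffs, ofMonicCoeffs, Fin.sum_univ_castSucc]
  simp [hx, Fin.is_lt, Nat.sub_ne_zero_of_lt]

theorem Monic.eq_prod_X_sub_C_of_injOn [IsDomain R] {ι : Type*} {p : R[X]} (hp : p.Monic)
    {s : Finset ι} {r : ι → R} (hr : Set.InjOn r s) (hroot : ∀ i ∈ s, p.IsRoot (r i))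
    (hdeg : p.natDegree ≤ s.card) : p = ∏ i ∈ s, (X - C (r i)) := by
  have hle : s.val.map r ≤ p.roots := by
    rw [Multiset.le_iff_subset (Multiset.Nodup.map_on (fun i hi j hj => hr hi hj) s.nodup)]
    intro y hy
    obtain ⟨i, hi, rfl⟩ := Multiset.mem_map.1 hy
    exact (mem_roots hp.ne_zero).2 (hroot i hi)
  have hroots : s.val.map r = p.roots :=
    Multiset.eq_of_le_of_card_le hle (by simpa using (card_roots' p).trans hdeg)
  rw [Finset.prod_eq_multiset_prod, ← Function.comp_def (fun a => X - C a) r,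
    ← Multiset.map_map, hroots, prod_multiset_X_sub_C_of_monic_of_roots_card_eq hp]
  exact le_antisymm (card_roots' p) (by simpa [← hroots] using hdeg)

end Polynomial

namespace PowerSeries

theorem rescale_expand_of_pow_eq_one {R : Type*} [CommRing R] {n : ℕ} (hn : n ≠ 0) {ω : R}
    (hω : ω ^ n = 1) (f : R⟦X⟧) : rescale ω (expand n hn f) = expand n hn f := by
  ext m
  rw [coeff_rescale, coeff_expand]
  split_ifs with h
  · obtain ⟨k, rfl⟩ := h
    rw [pow_mul, hω, one_pow, one_mul]
  · rw [mul_zero]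

theorem exists_isRoot_constantCoeff_eq_of_isRoot_map {R : Type*} [CommRing R] {f : R⟦X⟧[X]}
    (hf : f.Monic) {b : R} (hb : (f.map constantCoeff).IsRoot b)
    (hb' : IsUnit ((f.map constantCoeff).derivative.eval b)) :
    ∃ u, f.IsRoot u ∧ constantCoeff u = b := by
  have hcc : ∀ g : R⟦X⟧[X], constantCoeff (g.eval (C b)) = (g.map constantCoeff).eval b := by
    intro g
    simpa [eval_map] using (eval₂_hom constantCoeff (C b) (p := g)).symm
  obtain ⟨u, hu, hub⟩ := HenselianRing.is_henselian (I := Ideal.span {X}) f hf (C b)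
    (by rw [Ideal.mem_span_singleton, X_dvd_iff, hcc]; exact hb)
    (by
      refine IsUnit.map _ (isUnit_iff_constantCoeff.2 ?_)
      rwa [hcc, ← derivative_map])
  refine ⟨u, hu, ?_⟩
  rwa [Ideal.mem_span_singleton, X_dvd_iff, map_sub, constantCoeff_C, sub_eq_zero] at hub

theorem exists_isRoot_of_map_eq_X_pow_add_C {k : Type*} [Field k] [IsAlgClosed k] [CharZero k]
    {f : k⟦X⟧[X]} (hf : f.Monic) {n : ℕ} (hn : n ≠ 0) {a : k} (ha : a ≠ 0)
    (hfa : f.map constantCoeff = Polynomial.X ^ n + Polynomial.C a) :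
    ∃ u, f.IsRoot u ∧ constantCoeff u ≠ 0 := by
  obtain ⟨b, hb⟩ := IsAlgClosed.exists_pow_nat_eq (-a) (Nat.pos_of_ne_zero hn)
  have hb0 : b ≠ 0 := by
    rintro rfl
    exact ha (neg_eq_zero.1 (by rw [← hb, zero_pow hn]))
  obtain ⟨u, hu, rfl⟩ := exists_isRoot_constantCoeff_eq_of_isRoot_map hf
    (b := b) (by simp [hfa, hb]) (by simp [hfa, derivative_X_pow, hn, hb0])
  exact ⟨u, hu, hb0⟩

theorem isRoot_rescale_of_isRoot_ofMonicCoeffs_expand {R : Type*} [CommRing R] {n d : ℕ}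
    (hn : n ≠ 0) {c : Fin d → R⟦X⟧} {ζ : R⟦X⟧}
    (hζ : (ofMonicCoeffs fun i => expand n hn (c i)).IsRoot ζ) {ω : R} (hω : ω ^ n = 1) :
    (ofMonicCoeffs fun i => expand n hn (c i)).IsRoot (rescale ω ζ) := by
  have h := hζ.map (f := rescale ω)
  simp only [map_ofMonicCoeffs, rescale_expand_of_pow_eq_one hn hω] at h
  exact h

theorem exists_isRoot_X_mul_ofMonicCoeffs_expand {k : Type*} [Field k] [IsAlgClosed k]
    [CharZero k] {m : ℕ} (c : Fin (m + 1) → k⟦X⟧) (hc0 : ∀ i, constantCoeff (c i) = 0)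
    (hc : coeff 1 (c (Fin.last m)) ≠ 0) :
    ∃ u : k⟦X⟧, constantCoeff u ≠ 0 ∧
      (ofMonicCoeffs fun i => expand (m + 1) m.succ_ne_zero (c i)).IsRoot (X * u) := by
  choose e he using fun i => X_dvd_iff.2 (hc0 i)
  have hexpand : ∀ i, expand (m + 1) m.succ_ne_zero (c i) =
      X ^ (m + 1) * expand (m + 1) m.succ_ne_zero (e i) := fun i => by
    rw [he, map_mul, expand_X]
  have ha : constantCoeff (expand (m + 1) m.succ_ne_zero (e (Fin.last m))) ≠ 0 := by
    rwa [constantCoeff_expand, ← coeff_zero_eq_constantCoeff, ← coeff_succ_X_mul, ← he]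
  obtain ⟨u, hu, hu0⟩ := exists_isRoot_of_map_eq_X_pow_add_C (monic_ofMonicCoeffs _)
    m.succ_ne_zero ha (map_ofMonicCoeffs_pow_mul_of_map_eq_zero constantCoeff constantCoeff_X
      fun i => expand (m + 1) m.succ_ne_zero (e i))
  refine ⟨u, hu0, ?_⟩
  rw [IsRoot, funext hexpand, eval_mul_ofMonicCoeffs_pow_mul, hu.eq_zero, mul_zero]

end PowerSeries

/-- **Newton–Puiseux** (Theorem 1.4, totally ramified Eisenstein case): if
`χ(z,ζ) = ζⁿ + c₁(z)ζ^{n-1} + ⋯ + cₙ(z)` with `cᵢ(0) = 0` for all `i` and the `z`-adic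
valuation of `cₙ` exactly `1`, then there is `ζ₁(w) ∈ ℂ[[w]]` with zero constant term
such that `χ(wⁿ, ζ) = ∏_{i=0}^{n-1} (ζ - ζ₁(ωⁱ w))` for `ω` a primitive `n`-th root of
unity. Here `cᵢ(wⁿ)` is the series whose `m`-th coefficient is the `(m/n)`-th coefficient
of `cᵢ` when `n ∣ m` and `0` otherwise, and `ζ₁(ωⁱw) = rescale (ωⁱ) ζ₁`. -/
theorem newton_puiseux_eisenstein (n : ℕ) (hn : 1 ≤ n)
    (c : Fin n → PowerSeries ℂ)
    (hc0 : ∀ i : Fin n, PowerSeries.constantCoeff (c i) = 0)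
    (hcn : PowerSeries.coeff 1 (c ⟨n - 1, by omega⟩) ≠ 0) :
    ∃ ζ1 : PowerSeries ℂ, PowerSeries.constantCoeff ζ1 = 0 ∧
      ∀ ω : ℂ, IsPrimitiveRoot ω n →
        Polynomial.X ^ n +
            ∑ i : Fin n,
              Polynomial.C (PowerSeries.mk fun m =>
                  if n ∣ m then PowerSeries.coeff (m / n) (c i) else 0)
                * Polynomial.X ^ (n - 1 - (i : ℕ)) =
          ∏ i ∈ Finset.range n,
            (Polynomial.X - Polynomial.C (PowerSeries.rescale (ω ^ i) ζ1)) := by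
  obtain ⟨m, rfl⟩ := Nat.exists_eq_add_of_le' hn
  rw [show (⟨m + 1 - 1, _⟩ : Fin (m + 1)) = Fin.last m from Fin.ext (by simp)] at hcn
  obtain ⟨u, hu0, hu⟩ := PowerSeries.exists_isRoot_X_mul_ofMonicCoeffs_expand c hc0 hcn
  refine ⟨PowerSeries.X * u, by simp, fun ω hω => ?_⟩
  have hexpand : ∀ i, (PowerSeries.mk fun j =>
      if m + 1 ∣ j then PowerSeries.coeff (j / (m + 1)) (c i) else 0) =
      PowerSeries.expand (m + 1) m.succ_ne_zero (c i) := fun i =>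
    PowerSeries.ext fun j => by rw [PowerSeries.coeff_mk, PowerSeries.coeff_expand]
  simp_rw [hexpand]
  refine (monic_ofMonicCoeffs _).eq_prod_X_sub_C_of_injOn (fun i hi j hj hij => ?_)
    (fun i _ => PowerSeries.isRoot_rescale_of_isRoot_ofMonicCoeffs_expand _ hu
      (by rw [pow_right_comm, hω.pow_eq_one, one_pow]))
    (by simp [natDegree_ofMonicCoeffs])
  have hcoeff := congrArg (PowerSeries.coeff 1) hij
  simp only [PowerSeries.coeff_rescale, pow_one, PowerSeries.coeff_succ_X_mul,
    PowerSeries.coeff_zero_eq_constantCoeff] at hcoeff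
  exact hω.pow_inj (Finset.mem_range.1 hi) (Finset.mem_range.1 hj) (mul_right_cancel₀ hu0 hcoeff)
end

section
/- Let ζ(w) = ∑_{m=1}^∞ a_m w^m ∈ ℂ[[w]] be a formal power series with zero constant term such that det(ζ(w)·I − B(w^n)) = 0 in ℂ[[w]], where B(w^n) denotes the series obtained from B(z) by substituting z = w^n. Then b_1 = a_1^n, where b_1 = (B_1)_{n,1}. -/
/-!
Rows `1, …, n - 1` of `B(wⁿ)` are those of the shift `J`, so `B(wⁿ)` is a companion matrix:
`det (ζ I - B(wⁿ)) = ζⁿ - ∑ⱼ B(wⁿ)ₙⱼ ζʲ⁻¹`. Every entry of the last row of `B(wⁿ)` is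
divisible by `wⁿ`, with `wⁿ`-coefficient the corresponding entry of `B₁`. Comparing constant
terms in `ζⁿ = ∑ⱼ B(wⁿ)ₙⱼ ζʲ⁻¹` forces `ζ(0) = 0`, and then comparing `wⁿ`-coefficients
leaves only `a₁ⁿ = (B₁)ₙ₁`.
-/

open PowerSeries Matrix

namespace Matrix

variable {R : Type*} [CommRing R] {m : ℕ} (N : Matrix (Fin (m + 1)) (Fin (m + 1)) R) (x : R)

theorem det_smul_one_sub_submatrix_castSucc_succ 
    (hN : ∀ i : Fin m, N i.castSucc = Pi.single i.succ 1) :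
    ((x • 1 - N).submatrix Fin.castSucc Fin.succ).det = (-1) ^ m := by
  have hentry : ∀ i j : Fin m, (x • 1 - N).submatrix Fin.castSucc Fin.succ i j =
      (if (i : ℕ) = j + 1 then x else 0) - if i = j then 1 else 0 := by
    intro i j
    simp [hN, one_apply, Pi.single_apply, Fin.ext_iff, eq_comm]
  rw [det_of_isLowerTriangular _ fun i j (hij : i < j) => ?_]
  · simp only [hentry, if_neg (Nat.succ_ne_self _).symm, if_true, zero_sub]
    rw [Finset.prod_const, Finset.card_fin]
  · rw [hentry, if_neg (by omega), if_neg hij.ne, sub_zero]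

theorem smul_one_sub_mulVec_pow 
    (hN : ∀ i : Fin m, N i.castSucc = Pi.single i.succ 1) :
    (x • 1 - N) *ᵥ (fun j : Fin (m + 1) => x ^ (j : ℕ)) =
      Pi.single (Fin.last m) (x ^ (m + 1) - ∑ j, N (Fin.last m) j * x ^ (j : ℕ)) := by
  rw [sub_mulVec, smul_mulVec, one_mulVec]
  ext i
  induction i using Fin.lastCases with
  | last => simp [mulVec, dotProduct, pow_succ']
  | cast i =>
    rw [Pi.sub_apply, mulVec, hN, single_one_dotProduct,
      Pi.single_eq_of_ne (Fin.castSucc_ne_last i)]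
    simp [pow_succ']

theorem det_smul_one_sub_of_rows_eq_single 
    (hN : ∀ i : Fin m, N i.castSucc = Pi.single i.succ 1) :
    (x • 1 - N).det = x ^ (m + 1) - ∑ j, N (Fin.last m) j * x ^ (j : ℕ) := by
  have hcol :
      (updateCol (x • 1 - N) 0 ((x • 1 - N) *ᵥ fun j : Fin (m + 1) => x ^ (j : ℕ))).det =
        (x • 1 - N).det := by
    convert det_updateCol_sum (x • 1 - N) 0 fun j : Fin (m + 1) => x ^ (j : ℕ) using 3
    · ext k
      simp only [mulVec, dotProduct, smul_eq_mul, mul_comm]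
    · simp
  rw [← hcol, det_succ_column_zero, Fin.sum_univ_castSucc]
  simp only [updateCol_self, smul_one_sub_mulVec_pow N x hN, Fin.val_last,
    Pi.single_eq_of_ne (Fin.castSucc_ne_last _), Pi.single_eq_same, mul_zero, zero_mul,
    Finset.sum_const_zero, zero_add]
  rw [← Fin.succAbove_zero, submatrix_updateCol_succAbove, Fin.succAbove_zero,
    Fin.succAbove_last, det_smul_one_sub_submatrix_castSucc_succ N x hN, mul_right_comm,
    ← mul_pow, neg_one_mul, neg_neg, one_pow, one_mul]

end Matrix

namespace PowerSeries

variable {R : Type*} [CommRing R]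

theorem coeff_mul_of_X_pow_dvd {n : ℕ} {φ : R⟦X⟧} (hφ : X ^ n ∣ φ) (ψ : R⟦X⟧) :
    coeff n (φ * ψ) = coeff n φ * constantCoeff ψ := by
  obtain ⟨φ, rfl⟩ := hφ
  simp [mul_assoc, coeff_X_pow_mul']

theorem coeff_pow_self_of_constantCoeff_eq_zero {φ : R⟦X⟧} (hφ : constantCoeff φ = 0) (n : ℕ) :
    coeff n (φ ^ n) = coeff 1 φ ^ n := by
  obtain ⟨φ, rfl⟩ := X_dvd_iff.2 hφ
  simp [mul_pow, coeff_X_pow_mul']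

theorem X_pow_dvd_expand {p : ℕ} (hp : p ≠ 0) {φ : R⟦X⟧} (hφ : constantCoeff φ = 0) :
    X ^ p ∣ expand p hp φ := by
  obtain ⟨φ, rfl⟩ := X_dvd_iff.2 hφ
  simp

theorem coeff_one_pow_eq_of_pow_eq_sum [IsReduced R] {m : ℕ} {ζ : R⟦X⟧}
    {c : Fin (m + 1) → R⟦X⟧} (hc : ∀ j, X ^ (m + 1) ∣ c j)
    (h : ζ ^ (m + 1) = ∑ j, c j * ζ ^ (j : ℕ)) :
    coeff 1 ζ ^ (m + 1) = coeff (m + 1) (c 0) := by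
  have hc0 : ∀ j, constantCoeff (c j) = 0 := fun j =>
    X_dvd_iff.1 ((dvd_pow_self X m.succ_ne_zero).trans (hc j))
  have hζ : constantCoeff ζ = 0 := by
    refine eq_zero_of_pow_eq_zero (n := m + 1) ?_
    simpa [hc0] using congrArg constantCoeff h
  have hcoeff := congrArg (coeff (m + 1)) h
  rw [coeff_pow_self_of_constantCoeff_eq_zero hζ, map_sum, Fin.sum_univ_succ] at hcoeff
  simpa [coeff_mul_of_X_pow_dvd (hc _), hζ] using hcoeff

end PowerSeries

/-- If `ζ(w) = ∑_{m≥1} a_m wᵐ` is a power-series eigenvalue branch of the normal form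
`B`, i.e. `det(ζ(w)·I - B(wⁿ)) = 0` in `ℂ[[w]]`, then `b₁ = a₁ⁿ`,
where `b₁ = (B₁)_{n,1}`. -/
theorem first_puiseux_coefficient (n : ℕ) (hn : 2 ≤ n)
    (Bc : ℕ → Matrix (Fin n) (Fin n) ℂ)
    (hB0 : ∀ i j : Fin n, Bc 0 i j = if (i : ℕ) + 1 = (j : ℕ) then 1 else 0)
    (hBrow : ∀ ℓ : ℕ, 1 ≤ ℓ → ∀ i j : Fin n, (i : ℕ) + 1 < n → Bc ℓ i j = 0)
    (a : ℕ → ℂ)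
    (hroot : Matrix.det
      (PowerSeries.mk a • (1 : Matrix (Fin n) (Fin n) (PowerSeries ℂ)) -
        Matrix.of fun i j : Fin n => PowerSeries.mk fun m =>
          if n ∣ m then Bc (m / n) i j else 0) = 0) :
    Bc 1 ⟨n - 1, by omega⟩ ⟨0, by omega⟩ = (a 1) ^ n := by
  obtain ⟨m, rfl⟩ : ∃ m, n = m + 1 := ⟨n - 1, by omega⟩
  let B : Matrix (Fin (m + 1)) (Fin (m + 1)) ℂ⟦X⟧ := of fun i j => mk fun ℓ => Bc ℓ i j
  have hsubst : (of fun i j : Fin (m + 1) => mk fun k =>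
      if m + 1 ∣ k then Bc (k / (m + 1)) i j else 0) = B.map (expand (m + 1) m.succ_ne_zero) := by
    ext i j k
    simp [B, coeff_expand]
  have hshift : ∀ i : Fin m,
      B.map (expand (m + 1) m.succ_ne_zero) i.castSucc = Pi.single i.succ 1 := by
    intro i
    funext j
    have hconst : B i.castSucc j = C (Bc 0 i.castSucc j) := by
      ext (_ | ℓ)
      · simp [B]
      · simp [B, hBrow (ℓ + 1) ℓ.succ_pos i.castSucc j (by simp)]
    rw [map_apply, hconst, expand_C, hB0]
    simp [Pi.single_apply, Fin.ext_iff, eq_comm]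
  have hlast : ∀ j, constantCoeff (B (Fin.last m) j) = 0 := by
    intro j
    simp only [B, of_apply, constantCoeff_mk, hB0, Fin.val_last]
    exact if_neg (by omega)
  rw [hsubst, det_smul_one_sub_of_rows_eq_single _ _ hshift, sub_eq_zero] at hroot
  have h :=
    coeff_one_pow_eq_of_pow_eq_sum (fun j => X_pow_dvd_expand m.succ_ne_zero (hlast j)) hroot
  simp only [B, of_apply, coeff_expand, dvd_refl, if_true, Nat.div_self m.succ_pos, coeff_mk] at h
  exact h.symm
end

section
/- Let n ≥ 2, k ≥ 1, and let A(z) = ∑_{m=0}^∞ A_m z^m be a formal power series with coefficients A_m ∈ M_n(ℂ) whose constant coefficient A_0 is similar to J. Suppose g(z) and g'(z) are two polynomial gauge transformations, i.e. g(z) = (I + g_k z^k) ⋯ (I + g_1 z) g_0 and g'(z) = (I + g'_k z^k) ⋯ (I + g'_1 z) g'_0 with g_0, g'_0 ∈ GL_n(ℂ) and g_i, g'_i ∈ M_n(ℂ), such that both B(z) = g(z) A(z) g(z)^{−1} = ∑_{m=0}^∞ B_m z^m and B'(z) = g'(z) A(z) g'(z)^{−1} = ∑_{m=0}^∞ B'_m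 z^m satisfy: B_0 = B'_0 = J, and for every 1 ≤ ℓ ≤ k the matrices B_ℓ and B'_ℓ have nonzero entries only in their n-th (last) row. If moreover the entry (B_1)_{n,1} ≠ 0, then B_ℓ = B'_ℓ for every 0 ≤ ℓ ≤ k. -/
/-!
Both `B` and `B'` are conjugate to `A` by units of `Mₙ(ℂ)[[z]]`, so, viewed as matrices over the
commutative ring `ℂ[[z]]`, they have the same characteristic polynomial, and so do their
reductions modulo `z^(k+1)`. These reductions are companion matrices: all rows but the last are
those of `J`. By Cayley–Hamilton applied to the first row, the last row of a companion matrix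
is minus the vector of lower coefficients of its characteristic polynomial, hence
`B ≡ B' (mod z^(k+1))`.
-/

namespace Matrix

variable {S : Type*} [CommRing S] {n : ℕ}

def IsCompanion (M : Matrix (Fin n) (Fin n) S) : Prop :=
  ∀ i j : Fin n, (i : ℕ) + 1 < n → M i j = if (i : ℕ) + 1 = j then 1 else 0

variable {M : Matrix (Fin n) (Fin n) S}

lemma IsCompanion.pow_apply_zero (hM : M.IsCompanion) (h0 : 0 < n) (m : ℕ) (hm : m < n)
    (j : Fin n) :
    (M ^ m) ⟨0, h0⟩ j = if (j : ℕ) = m then 1 else 0 := by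
  induction m generalizing j with
  | zero => simp [one_apply, Fin.ext_iff, eq_comm]
  | succ m ih =>
    rw [pow_succ, mul_apply, Finset.sum_eq_single ⟨m, by omega⟩]
    · rw [ih (by omega), if_pos rfl, one_mul, hM _ _ hm]
      simp [eq_comm]
    · intro t _ ht
      rw [ih (by omega), if_neg (by simpa [Fin.ext_iff] using ht), zero_mul]
    · simp

lemma IsCompanion.apply_eq_neg_coeff_charpoly (hM : M.IsCompanion) {i : Fin n}
    (hi : (i : ℕ) + 1 = n) (j : Fin n) :
    M i j = -M.charpoly.coeff j := by
  cases subsingleton_or_nontrivial S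
  · exact Subsingleton.elim _ _
  have h0 : 0 < n := by omega
  have hpow := hM.pow_apply_zero h0
  have hlast : (M ^ n) ⟨0, h0⟩ j = M i j := by
    rw [show M ^ n = M ^ (i : ℕ) * M by rw [← pow_succ, hi], mul_apply, Finset.sum_eq_single i]
    · rw [hpow _ (by omega), if_pos rfl, one_mul]
    · intro t _ ht
      rw [hpow _ (by omega), if_neg (by simpa [Fin.ext_iff] using ht), zero_mul]
    · simp
  have hlow : (∑ m ∈ Finset.range n, M.charpoly.coeff m • M ^ m) ⟨0, h0⟩ j
      = M.charpoly.coeff j := by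
    simp only [sum_apply, smul_apply, smul_eq_mul]
    rw [Finset.sum_congr rfl fun m hm => by rw [hpow m (Finset.mem_range.mp hm)]]
    simp only [mul_ite, mul_one, mul_zero, Finset.sum_ite_eq, Finset.mem_range, Fin.is_lt,
      if_true]
  have hleading : M.charpoly.coeff n = 1 := by
    simpa using M.charpoly_monic.coeff_natDegree
  have hCH := congrFun (congrFun M.aeval_self_charpoly ⟨0, h0⟩) j
  rw [Polynomial.aeval_eq_sum_range, charpoly_natDegree_eq_dim, Fintype.card_fin,
    Finset.sum_range_succ, add_apply, hlow, hleading, one_smul, hlast, zero_apply] at hCH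
  linear_combination hCH

end Matrix

namespace PowerSeries

variable {ι R : Type*} [Fintype ι] [DecidableEq ι]

noncomputable def toMatrix [Semiring R] : (Matrix ι ι R)⟦X⟧ →+* Matrix ι ι R⟦X⟧ where
  toFun F := Matrix.of fun i j => mk fun m => coeff m F i j
  map_one' := by
    ext i j m
    by_cases hm : m = 0 <;> by_cases h : i = j <;> simp [hm, h, coeff_one, Matrix.one_apply]
  map_mul' F G := by
    ext i j m
    simp only [Matrix.of_apply, coeff_mk, coeff_mul, Matrix.mul_apply, Matrix.sum_apply, map_sum]
    exact Finset.sum_comm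
  map_zero' := by
    ext i j m
    simp
  map_add' F G := by
    ext i j m
    simp

@[simp]
lemma coeff_toMatrix_apply [Semiring R] (F : (Matrix ι ι R)⟦X⟧) (i j : ι) (m : ℕ) :
    coeff m (toMatrix F i j) = coeff m F i j := by
  simp [toMatrix]

lemma charpoly_toMatrix_eq_of_mul_eq_mul [CommRing R] {F A u : (Matrix ι ι R)⟦X⟧} (hu : IsUnit u)
    (h : F * u = u * A) : (toMatrix F).charpoly = (toMatrix A).charpoly := by
  obtain ⟨U, rfl⟩ := hu
  rw [← Units.mul_inv_cancel_right F U, h, map_mul, map_mul, Matrix.charpoly_mul_comm,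
    ← mul_assoc, ← map_mul, Units.inv_mul, map_one, one_mul]

lemma isUnit_prod_one_add_monomial_mul_C [Ring R] (l : List ℕ) (a : ℕ → R) (c : Rˣ) :
    IsUnit ((l.map fun i => 1 + monomial (i + 1) (a (i + 1))).prod * C (c : R)) := by
  refine (List.prod_isUnit fun f hf => ?_).mul (c.isUnit.map C)
  obtain ⟨i, -, rfl⟩ := List.mem_map.mp hf
  rw [isUnit_iff_constantCoeff, ← coeff_zero_eq_constantCoeff_apply, map_add, coeff_monomial,
    if_neg i.succ_ne_zero.symm, add_zero, coeff_zero_one]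
  exact isUnit_one

lemma mk_span_X_pow_eq_mk_iff [CommRing R] {k : ℕ} {f g : R⟦X⟧} :
    Ideal.Quotient.mk (Ideal.span {X ^ k}) f = Ideal.Quotient.mk (Ideal.span {X ^ k}) g ↔
      ∀ m < k, coeff m f = coeff m g := by
  simp [Ideal.Quotient.eq, Ideal.mem_span_singleton, X_pow_dvd_iff, sub_eq_zero]

variable [CommRing R] {n k : ℕ} {J : Matrix (Fin n) (Fin n) R}
  {F F' : (Matrix (Fin n) (Fin n) R)⟦X⟧}

lemma isCompanion_map_toMatrix (hJ : ∀ i j : Fin n, J i j = if (i : ℕ) + 1 = j then 1 else 0)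
    (hF0 : coeff 0 F = J)
    (hF : ∀ ℓ : ℕ, 1 ≤ ℓ → ℓ ≤ k → ∀ i j : Fin n, (i : ℕ) + 1 < n → coeff ℓ F i j = 0) :
    ((toMatrix F).map (Ideal.Quotient.mk (Ideal.span {X ^ (k + 1)}))).IsCompanion := by
  intro i j hi
  have hJ_mod : Ideal.Quotient.mk (Ideal.span {X ^ (k + 1)}) (toMatrix F i j)
      = Ideal.Quotient.mk (Ideal.span {X ^ (k + 1)}) (C (J i j)) := by
    rw [mk_span_X_pow_eq_mk_iff]
    rintro (_ | m) hm
    · simp [hF0]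
    · simp [hF (m + 1) (by omega) (by omega) i j hi]
  rw [Matrix.map_apply, hJ_mod, hJ]
  split_ifs <;> simp

lemma coeff_eq_of_charpoly_toMatrix_eq
    (hJ : ∀ i j : Fin n, J i j = if (i : ℕ) + 1 = j then 1 else 0)
    (hF0 : coeff 0 F = J) (hF0' : coeff 0 F' = J)
    (hF : ∀ ℓ : ℕ, 1 ≤ ℓ → ℓ ≤ k → ∀ i j : Fin n, (i : ℕ) + 1 < n → coeff ℓ F i j = 0)
    (hF' : ∀ ℓ : ℕ, 1 ≤ ℓ → ℓ ≤ k → ∀ i j : Fin n, (i : ℕ) + 1 < n → coeff ℓ F' i j = 0)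
    (hcp : (toMatrix F).charpoly = (toMatrix F').charpoly) :
    ∀ ℓ ≤ k, coeff ℓ F = coeff ℓ F' := by
  set π := Ideal.Quotient.mk (Ideal.span {(X : R⟦X⟧) ^ (k + 1)})
  have hlast (i j : Fin n) (hi : (i : ℕ) + 1 = n) : π (toMatrix F i j) = π (toMatrix F' i j) := by
    have h := (isCompanion_map_toMatrix hJ hF0 hF).apply_eq_neg_coeff_charpoly hi j
    rwa [Matrix.charpoly_map, hcp, ← Matrix.charpoly_map,
      ← (isCompanion_map_toMatrix hJ hF0' hF').apply_eq_neg_coeff_charpoly hi j] at h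
  intro ℓ hℓ
  ext i j
  rcases Nat.lt_or_ge ((i : ℕ) + 1) n with hi | hi
  · rcases ℓ with _ | ℓ
    · rw [hF0, hF0']
    · rw [hF _ ℓ.succ_pos hℓ i j hi, hF' _ ℓ.succ_pos hℓ i j hi]
  · simpa using mk_span_X_pow_eq_mk_iff.mp (hlast i j (by omega)) ℓ (by omega)

end PowerSeries

/-- **Uniqueness of the normal form.** If two polynomial gauge transformations
`g(z) = (I + g_k zᵏ)⋯(I + g₁ z) g₀` and `g'(z) = (I + g'_k zᵏ)⋯(I + g'₁ z) g'₀`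
bring `A` (whose constant term is similar to the Jordan block `J`) to normal forms
`B = g A g⁻¹` and `B' = g' A g'⁻¹` (encoded by `B * g = g * A`, `B' * g' = g' * A`,
which determines `B`, `B'` since `g`, `g'` are invertible in `Mₙ(ℂ)[[z]]`), i.e.
`B₀ = B'₀ = J` and `B_ℓ`, `B'_ℓ` are nonzero only in the last row for `1 ≤ ℓ ≤ k`,
and if moreover `(B₁)_{n,1} ≠ 0`, then `B_ℓ = B'_ℓ` for all `0 ≤ ℓ ≤ k`. -/
theorem normal_form_uniqueness (n k : ℕ)
    (J : Matrix (Fin n) (Fin n) ℂ)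
    (hJ : ∀ i j : Fin n, J i j = if (i : ℕ) + 1 = (j : ℕ) then 1 else 0)
    (A : PowerSeries (Matrix (Fin n) (Fin n) ℂ))
    (g0 g0' : (Matrix (Fin n) (Fin n) ℂ)ˣ)
    (gs gs' : ℕ → Matrix (Fin n) (Fin n) ℂ)
    (B B' : PowerSeries (Matrix (Fin n) (Fin n) ℂ))
    (hB : B * (((List.range k).reverse.map
        (fun i => (1 : PowerSeries (Matrix (Fin n) (Fin n) ℂ))
          + PowerSeries.monomial (i + 1) (gs (i + 1)))).prod
        * PowerSeries.C (g0 : Matrix (Fin n) (Fin n) ℂ)) =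
      (((List.range k).reverse.map
        (fun i => (1 : PowerSeries (Matrix (Fin n) (Fin n) ℂ))
          + PowerSeries.monomial (i + 1) (gs (i + 1)))).prod
        * PowerSeries.C (g0 : Matrix (Fin n) (Fin n) ℂ)) * A)
    (hB' : B' * (((List.range k).reverse.map
        (fun i => (1 : PowerSeries (Matrix (Fin n) (Fin n) ℂ))
          + PowerSeries.monomial (i + 1) (gs' (i + 1)))).prod
        * PowerSeries.C (g0' : Matrix (Fin n) (Fin n) ℂ)) =
      (((List.range k).reverse.map
        (fun i => (1 : PowerSeries (Matrix (Fin n) (Fin n) ℂ))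
          + PowerSeries.monomial (i + 1) (gs' (i + 1)))).prod
        * PowerSeries.C (g0' : Matrix (Fin n) (Fin n) ℂ)) * A)
    (hB0 : PowerSeries.coeff 0 B = J) (hB0' : PowerSeries.coeff 0 B' = J)
    (hBrow : ∀ ℓ : ℕ, 1 ≤ ℓ → ℓ ≤ k → ∀ i j : Fin n, (i : ℕ) + 1 < n →
      PowerSeries.coeff ℓ B i j = 0)
    (hBrow' : ∀ ℓ : ℕ, 1 ≤ ℓ → ℓ ≤ k → ∀ i j : Fin n, (i : ℕ) + 1 < n →
      PowerSeries.coeff ℓ B' i j = 0) :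
    ∀ ℓ : ℕ, ℓ ≤ k → PowerSeries.coeff ℓ B = PowerSeries.coeff ℓ B' := by
  have hcp := PowerSeries.charpoly_toMatrix_eq_of_mul_eq_mul
    (PowerSeries.isUnit_prod_one_add_monomial_mul_C _ gs g0) hB
  have hcp' := PowerSeries.charpoly_toMatrix_eq_of_mul_eq_mul
    (PowerSeries.isUnit_prod_one_add_monomial_mul_C _ gs' g0') hB'
  exact PowerSeries.coeff_eq_of_charpoly_toMatrix_eq hJ hB0 hB0' hBrow hBrow' (hcp.trans hcp'.symm)
end
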